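/- Let D be a t-balanced multi-orientation of minimum weight for an instance (G,w,t) of BCPP, and let H be the undirected version of D (the undirected multigraph with μ_H({u,v}) = μ_D(u,v) + μ_D(v,u)). Then H has a well-behaved t-road, i.e. a t-road T of H such that μ_T(u,v) + μ_T(v,u) ≤ 1 for every edge uv ∈ E \ F, where F ⊆ E is the union of all small t-cuts of G. -/

import Mathlib

/-!
Statement 5: Let `D` be a `t`-balanced multi-orientation of minimum weight for an instance
`(G,w,t)` of BCPP, and let `H` be the undirected version of `D` (the undirected multigraph
with `μ_H({u,v}) = μ_D(u,v) + μ_D(v,u)`).  Then `H` has a well-behaved `t`-road, i.e. a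
`t`-road `T` of `H` such that `μ_T(u,v) + μ_T(v,u) ≤ 1` for every edge `uv ∈ E \ F`, where
`F ⊆ E` is the union of all small `t`-cuts of `G` (with `G` viewed as a multigraph with all
multiplicities `1`).
-/

namespace Stmt5

variable {V : Type*} [Fintype V] [DecidableEq V]

/-- Out-degree of `v` in the directed multigraph with multiplicity function `μ`. -/
def outDeg (μ : V → V → ℕ) (v : V) : ℕ := ∑ u, μ v u

/-- In-degree of `v` in the directed multigraph with multiplicity function `μ`. -/
def inDeg (μ : V → V → ℕ) (v : V) : ℕ := ∑ u, μ u v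

/-- `μ` is `t`-balanced: `d⁺(v) − d⁻(v) = t(v)` for every vertex `v`. -/
def TBalanced (t : V → ℤ) (μ : V → V → ℕ) : Prop :=
  ∀ v, (outDeg μ v : ℤ) - (inDeg μ v : ℤ) = t v

/-- `μ` is a multi-orientation of the simple undirected graph `G`. -/
def IsMultiOrientation (G : SimpleGraph V) (μ : V → V → ℕ) : Prop :=
  (∀ u v : V, G.Adj u v → 1 ≤ μ u v + μ v u) ∧
  (∀ u v : V, ¬ G.Adj u v → μ u v = 0)

/-- A `t`-road of the undirected multigraph `μH`. -/
def IsTRoad (μH : V → V → ℕ) (t : V → ℤ) (μT : V → V → ℕ) : Prop :=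
  (∀ u v : V, μT u v + μT v u ≤ μH u v) ∧
  (∀ v, (outDeg μT v : ℤ) - (inDeg μT v : ℤ) = t v)

/-- The weight of a directed multigraph `μ` with respect to edge weights `w : Sym2 V → ℕ`. -/
def weight (w : Sym2 V → ℕ) (μ : V → V → ℕ) : ℕ := ∑ u, ∑ v, μ u v * w s(u, v)

/-- The multigraph `H*` on vertex set `V ⊕ Bool`, where `Sum.inr true` plays the role of
`a` and `Sum.inr false` plays the role of `b`. -/
def auxGraph (μH : V → V → ℕ) (t : V → ℤ) : (V ⊕ Bool) → (V ⊕ Bool) → ℕ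
  | Sum.inl u, Sum.inl v => μH u v
  | Sum.inl u, Sum.inr c => if c then (t u).toNat else (-t u).toNat
  | Sum.inr c, Sum.inl v => if c then (t v).toNat else (-t v).toNat
  | Sum.inr _, Sum.inr _ => 0

/-- `c` is a set of edges of the multigraph `ν` whose removal disconnects `a` from `b`. -/
def IsCutFn {W : Type*} (ν : W → W → ℕ) (a b : W) (c : W → W → ℕ) : Prop :=
  (∀ x y : W, c x y = c y x) ∧ (∀ x y : W, c x y ≤ ν x y) ∧
  ¬ Relation.ReflTransGen (fun x y => c x y < ν x y) a b

/-- `c` is a minimal `(a,b)`-cut of `ν`. -/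
def IsMinimalCutFn {W : Type*} (ν : W → W → ℕ) (a b : W) (c : W → W → ℕ) : Prop :=
  IsCutFn ν a b c ∧
  ∀ c' : W → W → ℕ, (∀ x y : W, c' x y ≤ c x y) → IsCutFn ν a b c' → c' = c

/-- The edge `uv` of the simple graph `G` belongs to the union `F` of all small `t`-cuts of
`G`: some minimal `(a,b)`-cut of `G*` of size less than `p` contains (a copy of) `uv`
(size condition stated doubled: `Σ_x Σ_y c x y = 2 |F'| < 2p`). -/
def InUnionOfSmallTCuts (G : SimpleGraph V) [DecidableRel G.Adj] (t : V → ℤ)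
    (u v : V) : Prop :=
  ∃ c : (V ⊕ Bool) → (V ⊕ Bool) → ℕ,
    IsMinimalCutFn (auxGraph (fun x y => if G.Adj x y then 1 else 0) t)
      (Sum.inr true) (Sum.inr false) c ∧
    ((∑ x, ∑ y, c x y : ℕ) : ℤ) < 2 * (∑ x ∈ Finset.univ.filter (fun x => 0 < t x), t x) ∧
    0 < c (Sum.inl u) (Sum.inl v)

/-! ### Auxiliary flow theory -/

section Flow

set_option linter.unusedSectionVars false

variable {W : Type*} [Fintype W] [DecidableEq W]

/-- The excess (out-degree minus in-degree, as an integer) of `x`. -/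
def excess (f : W → W → ℕ) (x : W) : ℤ := (outDeg f x : ℤ) - (inDeg f x : ℤ)

lemma excess_eq_sum (f : W → W → ℕ) (x : W) :
    excess f x = ∑ y, ((f x y : ℤ) - (f y x : ℤ)) := by
  simp [excess, outDeg, inDeg, Finset.sum_sub_distrib]

lemma sum_excess (f : W → W → ℕ) (S : Finset W) :
    ∑ x ∈ S, excess f x = ∑ x ∈ S, ∑ y ∈ Sᶜ, ((f x y : ℤ) - (f y x : ℤ)) := by
  have key : ∑ x ∈ S, ∑ y ∈ S, ((f x y : ℤ) - (f y x : ℤ)) = 0 := by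
    have h1 : (∑ x ∈ S, ∑ y ∈ S, (f x y : ℤ)) = ∑ x ∈ S, ∑ y ∈ S, (f y x : ℤ) :=
      Finset.sum_comm
    simp only [Finset.sum_sub_distrib]
    omega
  calc ∑ x ∈ S, excess f x
      = ∑ x ∈ S, (∑ y ∈ S, ((f x y : ℤ) - (f y x : ℤ))
          + ∑ y ∈ Sᶜ, ((f x y : ℤ) - (f y x : ℤ))) := by
        refine Finset.sum_congr rfl fun x _ => ?_
        rw [excess_eq_sum, ← Finset.sum_add_sum_compl S]
    _ = ∑ x ∈ S, ∑ y ∈ S, ((f x y : ℤ) - (f y x : ℤ))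
          + ∑ x ∈ S, ∑ y ∈ Sᶜ, ((f x y : ℤ) - (f y x : ℤ)) := Finset.sum_add_distrib
    _ = ∑ x ∈ S, ∑ y ∈ Sᶜ, ((f x y : ℤ) - (f y x : ℤ)) := by rw [key, zero_add]

/-- A flow with respect to capacities `cap`, source `a`, sink `b`. -/
def IsFlow (cap : W → W → ℕ) (a b : W) (f : W → W → ℕ) : Prop :=
  (∀ x y, f x y ≤ cap x y) ∧ ∀ x, x ≠ a → x ≠ b → excess f x = 0

/-- The residual relation of a flow. -/
def resid (cap f : W → W → ℕ) (x y : W) : Prop := f x y < cap x y ∨ 0 < f y x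

lemma excess_le_outDeg_cap {cap : W → W → ℕ} {f : W → W → ℕ}
    (hle : ∀ x y, f x y ≤ cap x y) (x : W) :
    excess f x ≤ (outDeg cap x : ℤ) := by
  have h1 : outDeg f x ≤ outDeg cap x := Finset.sum_le_sum fun y _ => hle x y
  have : (0 : ℤ) ≤ inDeg f x := Int.ofNat_nonneg _
  unfold excess
  omega

lemma weak_duality {cap : W → W → ℕ} {a b : W} {f : W → W → ℕ}
    (hf : IsFlow cap a b f) {S : Finset W} (ha : a ∈ S) (hb : b ∉ S) :
    excess f a ≤ ∑ x ∈ S, ∑ y ∈ Sᶜ, (cap x y : ℤ) := by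
  have h1 : ∑ x ∈ S, excess f x = excess f a := by
    refine Finset.sum_eq_single_of_mem a ha fun z hz hza => ?_
    exact hf.2 z hza (fun h => hb (h ▸ hz))
  rw [← h1, sum_excess]
  refine Finset.sum_le_sum fun x _ => Finset.sum_le_sum fun y _ => ?_
  have h2 : (f x y : ℤ) ≤ cap x y := Int.ofNat_le.2 (hf.1 x y)
  have h3 : (0 : ℤ) ≤ (f y x : ℤ) := Int.ofNat_nonneg _
  omega

lemma exists_max_flow (cap : W → W → ℕ) (a b : W) :
    ∃ f, IsFlow cap a b f ∧ ∀ g, IsFlow cap a b g → excess g a ≤ excess f a := by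
  obtain ⟨ub, ⟨f, hf, hfa⟩, hub⟩ := Int.exists_greatest_of_bdd
    (P := fun z => ∃ f, IsFlow cap a b f ∧ excess f a = z)
    ⟨(outDeg cap a : ℤ), fun z ⟨f, hf, hfa⟩ => hfa ▸ excess_le_outDeg_cap hf.1 a⟩
    ⟨0, (fun _ _ => 0), ⟨fun _ _ => Nat.zero_le _, fun x _ _ => by simp [excess, outDeg, inDeg]⟩,
      by simp [excess, outDeg, inDeg]⟩
  exact ⟨f, hf, fun g hg => hfa ▸ hub _ ⟨g, hg, rfl⟩⟩

lemma getLastD_eq_getLast {α : Type*} : ∀ (l : List α) (a : α),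
    l.getLastD a = (a :: l).getLast (List.cons_ne_nil a l)
  | [], _ => rfl
  | c :: l, a => by
    rw [List.getLastD_cons, getLastD_eq_getLast l c, List.getLast_cons_cons]

lemma getLastD_append {α : Type*} : ∀ (s : List α) (c : α) (t : List α) (d : α),
    (s ++ c :: t).getLastD d = t.getLastD c := by
  intro s
  induction s with
  | nil =>
    intro c t d
    rw [List.nil_append]
    exact List.getLastD_cons
  | cons e s ih =>
    intro c t d
    rw [List.cons_append, List.getLastD_cons, ih]

lemma exists_nodup_chain_aux {α : Type*} {r : α → α → Prop} :
    ∀ (n : ℕ) (l : List α) (a : α), l.length ≤ n → List.Chain r a l →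
    ∃ l', List.Chain r a l' ∧ (a :: l').Nodup ∧ l'.getLastD a = l.getLastD a ∧
      ∀ z ∈ l', z ∈ l := by
  intro n
  induction n with
  | zero =>
    intro l a hl _
    have : l = [] := List.length_eq_zero_iff.mp (Nat.le_zero.mp hl)
    subst this
    exact ⟨[], List.Chain.nil, by simp, rfl, by simp⟩
  | succ n ih =>
    intro l a hl hchain
    by_cases hmem : a ∈ l
    · obtain ⟨s, t2, rfl⟩ := List.append_of_mem hmem
      have hct : List.Chain r a t2 := (List.isChain_cons_split.mp hchain).2
      have hlen : t2.length ≤ n := by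
        have := hl
        simp only [List.length_append, List.length_cons] at this
        omega
      obtain ⟨l', h1, h2, h3, h4⟩ := ih t2 a hlen hct
      refine ⟨l', h1, h2, ?_, fun z hz => ?_⟩
      · rw [h3, getLastD_append]
      · have := h4 z hz
        simp only [List.mem_append, List.mem_cons]
        tauto
    · cases l with
      | nil => exact ⟨[], List.Chain.nil, by simp, rfl, by simp⟩
      | cons c rest =>
        have hrc : r a c := (List.chain_cons.mp hchain).1
        have hcr : List.Chain r c rest := (List.chain_cons.mp hchain).2
        have hlen : rest.length ≤ n := by
          simp only [List.length_cons] at hl; omega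
        obtain ⟨l', h1, h2, h3, h4⟩ := ih rest c hlen hcr
        refine ⟨c :: l', List.chain_cons.mpr ⟨hrc, h1⟩, ?_, ?_, ?_⟩
        · refine List.nodup_cons.mpr ⟨?_, h2⟩
          intro hmem'
          rcases List.mem_cons.mp hmem' with h | h
          · exact hmem (h ▸ (List.mem_cons_self : c ∈ c :: rest))
          · exact hmem (List.mem_cons.mpr (Or.inr (h4 _ h)))
        · rw [List.getLastD_cons, List.getLastD_cons, h3]
        · intro z hz
          rcases List.mem_cons.mp hz with h | h
          · simp [h]
          · exact List.mem_cons.mpr (Or.inr (h4 _ h))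

lemma exists_nodup_chain {α : Type*} {r : α → α → Prop} {a b : α}
    (h : Relation.ReflTransGen r a b) :
    ∃ l, List.Chain r a l ∧ (a :: l).Nodup ∧ l.getLastD a = b := by
  obtain ⟨l, hc, hl⟩ := List.exists_isChain_cons_of_relationReflTransGen h
  obtain ⟨l', h1, h2, h3, -⟩ := exists_nodup_chain_aux l.length l a le_rfl hc
  exact ⟨l', h1, h2, by rw [h3, getLastD_eq_getLast]; exact hl⟩

lemma chain_of_agree {α : Type*} {r r' : α → α → Prop} :
    ∀ (l : List α) (x : α), List.Chain r x l →
      (∀ u v, u ∈ x :: l → v ∈ x :: l → r u v → r' u v) → List.Chain r' x l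
  | [], _, _, _ => List.Chain.nil
  | c :: l, x, h, hag => by
    rcases List.chain_cons.mp h with ⟨h1, h2⟩
    refine List.chain_cons.mpr ⟨hag _ _ (by simp) (by simp) h1,
      chain_of_agree l c h2 fun u v hu hv hr => ?_⟩
    refine hag u v ?_ ?_ hr
    · simp only [List.mem_cons] at hu ⊢; tauto
    · simp only [List.mem_cons] at hv ⊢; tauto

lemma excess_add_ind (f : W → W → ℕ) (x y : W) (z : W) :
    excess (fun u v => f u v + (if u = x ∧ v = y then 1 else 0)) z
      = excess f z + (if z = x then (1:ℤ) else 0) - (if z = y then (1:ℤ) else 0) := by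
  have hout : outDeg (fun u v => f u v + (if u = x ∧ v = y then 1 else 0)) z
      = outDeg f z + (if z = x then 1 else 0) := by
    unfold outDeg
    rw [Finset.sum_add_distrib]
    congr 1
    by_cases hz : z = x
    · subst hz; simp
    · simp [hz]
  have hin : inDeg (fun u v => f u v + (if u = x ∧ v = y then 1 else 0)) z
      = inDeg f z + (if z = y then 1 else 0) := by
    unfold inDeg
    rw [Finset.sum_add_distrib]
    congr 1
    by_cases hz : z = y
    · subst hz; simp
    · simp [hz]
  unfold excess
  rw [hout, hin]
  by_cases hzx : z = x <;> by_cases hzy : z = y <;> simp [hzx, hzy] <;> push_cast <;> ring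

lemma excess_sub_ind (f : W → W → ℕ) (x y : W) (hpos : 0 < f y x) (z : W) :
    excess (fun u v => f u v - (if u = y ∧ v = x then 1 else 0)) z
      = excess f z + (if z = x then (1:ℤ) else 0) - (if z = y then (1:ℤ) else 0) := by
  set g : W → W → ℕ := fun u v => f u v - (if u = y ∧ v = x then 1 else 0) with hg
  have hfg : ∀ u v, f u v = g u v + (if u = y ∧ v = x then 1 else 0) := by
    intro u v
    simp only [hg]
    split
    · next h =>
        obtain ⟨rfl, rfl⟩ := h
        omega
    · omega
  have hout : outDeg f z = outDeg g z + (if z = y then 1 else 0) := by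
    unfold outDeg
    calc ∑ u, f z u = ∑ u, (g z u + (if z = y ∧ u = x then 1 else 0)) := by
          refine Finset.sum_congr rfl fun u _ => hfg z u
      _ = (∑ u, g z u) + ∑ u, (if z = y ∧ u = x then 1 else 0) := Finset.sum_add_distrib
      _ = (∑ u, g z u) + (if z = y then 1 else 0) := by
          congr 1
          by_cases hz : z = y
          · subst hz; simp
          · simp [hz]
  have hin : inDeg f z = inDeg g z + (if z = x then 1 else 0) := by
    unfold inDeg
    calc ∑ u, f u z = ∑ u, (g u z + (if u = y ∧ z = x then 1 else 0)) := by
          refine Finset.sum_congr rfl fun u _ => hfg u z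
      _ = (∑ u, g u z) + ∑ u, (if u = y ∧ z = x then 1 else 0) := Finset.sum_add_distrib
      _ = (∑ u, g u z) + (if z = x then 1 else 0) := by
          congr 1
          by_cases hz : z = x
          · subst hz; simp
          · simp [hz]
  unfold excess
  rw [hout, hin]
  by_cases hzx : z = x <;> by_cases hzy : z = y <;> simp [hzx, hzy] <;> push_cast <;> ring

lemma augment (cap : W → W → ℕ) :
    ∀ (l : List W) (x : W) (f : W → W → ℕ),
      (∀ u v, f u v ≤ cap u v) → List.Chain (resid cap f) x l → (x :: l).Nodup →
      ∃ f' : W → W → ℕ, (∀ u v, f' u v ≤ cap u v) ∧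
        ∀ z, excess f' z = excess f z + (if z = x then (1:ℤ) else 0)
          - (if z = l.getLastD x then (1:ℤ) else 0) := by
  intro l
  induction l with
  | nil =>
    intro x f hle _ _
    exact ⟨f, hle, fun z => by simp⟩
  | cons y l ih =>
    intro x f hle hchain hnodup
    rcases List.chain_cons.mp hchain with ⟨hr, hch⟩
    have hxl : x ∉ y :: l := (List.nodup_cons.mp hnodup).1
    obtain ⟨f₁, hle₁, hagree, hexc₁⟩ :
        ∃ f₁ : W → W → ℕ, (∀ u v, f₁ u v ≤ cap u v) ∧
          (∀ u v, u ≠ x → v ≠ x → f₁ u v = f u v) ∧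
          (∀ z, excess f₁ z = excess f z + (if z = x then (1:ℤ) else 0)
            - (if z = y then (1:ℤ) else 0)) := by
      rcases hr with hlt | hpos
      · refine ⟨fun u v => f u v + (if u = x ∧ v = y then 1 else 0), ?_, ?_,
          excess_add_ind f x y⟩
        · intro u v
          have h0 := hle u v
          simp only []
          split
          · next h =>
              obtain ⟨rfl, rfl⟩ := h
              omega
          · omega
        · intro u v hu _
          have : ¬(u = x ∧ v = y) := fun h => hu h.1
          simp [this]
      · refine ⟨fun u v => f u v - (if u = y ∧ v = x then 1 else 0), ?_, ?_,
          excess_sub_ind f x y hpos⟩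
        · intro u v
          exact le_trans (Nat.sub_le _ _) (hle u v)
        · intro u v _ hv
          have : ¬(u = y ∧ v = x) := fun h => hv h.2
          simp [this]
    have hch₁ : List.Chain (resid cap f₁) y l := by
      refine chain_of_agree _ _ hch fun u v hu hv h => ?_
      have hu' : u ≠ x := fun e => hxl (e ▸ hu)
      have hv' : v ≠ x := fun e => hxl (e ▸ hv)
      unfold resid at h ⊢
      rw [hagree u v hu' hv', hagree v u hv' hu']
      exact h
    obtain ⟨f', hle', hexc'⟩ := ih y f₁ hle₁ hch₁ (List.nodup_cons.mp hnodup).2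
    refine ⟨f', hle', fun z => ?_⟩
    rw [hexc' z, hexc₁ z, List.getLastD_cons]
    ring

lemma maxflow_not_reach {cap : W → W → ℕ} {a b : W} (hab : a ≠ b) {f : W → W → ℕ}
    (hf : IsFlow cap a b f) (hmax : ∀ g, IsFlow cap a b g → excess g a ≤ excess f a) :
    ¬ Relation.ReflTransGen (resid cap f) a b := by
  intro h
  obtain ⟨l, hc, hnd, hlast⟩ := exists_nodup_chain h
  obtain ⟨f', hle', hexc'⟩ := augment cap l a f hf.1 hc hnd
  have hflow' : IsFlow cap a b f' := by
    refine ⟨hle', fun z hza hzb => ?_⟩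
    rw [hexc' z, hlast]
    simp [hza, hzb, hf.2 z hza hzb]
  have hle2 := hmax f' hflow'
  rw [hexc' a, hlast] at hle2
  rw [if_pos rfl, if_neg hab] at hle2
  omega

lemma sum_excess_univ (f : W → W → ℕ) : ∑ x, excess f x = 0 := by
  have := sum_excess f Finset.univ
  simpa using this

lemma excess_sink {cap : W → W → ℕ} {a b : W} (hab : a ≠ b) {f : W → W → ℕ}
    (hf : IsFlow cap a b f) : excess f b = - excess f a := by
  have h0 := sum_excess_univ f
  have h1 : ∑ x ∈ ({a, b} : Finset W), excess f x + ∑ x ∈ ({a, b} : Finset W)ᶜ, excess f x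
      = ∑ x, excess f x := Finset.sum_add_sum_compl _ _
  have h2 : ∑ x ∈ ({a, b} : Finset W)ᶜ, excess f x = 0 := by
    refine Finset.sum_eq_zero fun x hx => ?_
    rw [Finset.mem_compl, Finset.mem_insert, Finset.mem_singleton] at hx
    push_neg at hx
    exact hf.2 x hx.1 hx.2
  have h3 : ∑ x ∈ ({a, b} : Finset W), excess f x = excess f a + excess f b :=
    Finset.sum_pair hab
  omega

lemma sum_ite_cross (c : W → W → ℕ) (S : Finset W) :
    ∑ x, ∑ y, (if x ∈ S ∧ y ∉ S then c x y else 0) = ∑ x ∈ S, ∑ y ∈ Sᶜ, c x y := by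
  have h1 : ∀ x, ∑ y, (if x ∈ S ∧ y ∉ S then c x y else 0)
      = if x ∈ S then ∑ y ∈ Sᶜ, c x y else 0 := by
    intro x
    by_cases hx : x ∈ S
    · simp only [hx, true_and, if_pos]
      rw [show (fun y => if y ∉ S then c x y else 0) = fun y => if y ∈ Sᶜ then c x y else 0
        from funext fun y => by simp [Finset.mem_compl]]
      rw [Finset.sum_ite_mem, Finset.univ_inter]
    · simp [hx]
  rw [Finset.sum_congr rfl fun x _ => h1 x, Finset.sum_ite_mem, Finset.univ_inter]

lemma sum_ite_crossEither (c : W → W → ℕ) (hsymc : ∀ x y, c x y = c y x) (S : Finset W) :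
    ∑ x, ∑ y, (if (x ∈ S ∧ y ∉ S) ∨ (y ∈ S ∧ x ∉ S) then c x y else 0)
      = 2 * ∑ x ∈ S, ∑ y ∈ Sᶜ, c x y := by
  have hsplit : ∀ x y : W, (if (x ∈ S ∧ y ∉ S) ∨ (y ∈ S ∧ x ∉ S) then c x y else 0)
      = (if x ∈ S ∧ y ∉ S then c x y else 0) + (if y ∈ S ∧ x ∉ S then c x y else 0) := by
    intro x y
    by_cases h1 : x ∈ S <;> by_cases h2 : y ∈ S <;> simp [h1, h2]
  calc ∑ x, ∑ y, (if (x ∈ S ∧ y ∉ S) ∨ (y ∈ S ∧ x ∉ S) then c x y else 0)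
      = ∑ x, ∑ y, ((if x ∈ S ∧ y ∉ S then c x y else 0)
          + (if y ∈ S ∧ x ∉ S then c x y else 0)) := by
        exact Finset.sum_congr rfl fun x _ => Finset.sum_congr rfl fun y _ => hsplit x y
    _ = (∑ x, ∑ y, (if x ∈ S ∧ y ∉ S then c x y else 0))
          + ∑ x, ∑ y, (if y ∈ S ∧ x ∉ S then c x y else 0) := by
        rw [← Finset.sum_add_distrib]
        exact Finset.sum_congr rfl fun x _ => Finset.sum_add_distrib
    _ = 2 * ∑ x ∈ S, ∑ y ∈ Sᶜ, c x y := by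
        rw [sum_ite_cross]
        have h2 : ∑ x, ∑ y, (if y ∈ S ∧ x ∉ S then c x y else 0)
            = ∑ y, ∑ x, (if y ∈ S ∧ x ∉ S then c x y else 0) := Finset.sum_comm
        rw [h2]
        have h3 : ∑ y, ∑ x, (if y ∈ S ∧ x ∉ S then c x y else 0)
            = ∑ y ∈ S, ∑ x ∈ Sᶜ, c x y := sum_ite_cross (fun p q => c q p) S
        rw [h3]
        have h4 : ∑ y ∈ S, ∑ x ∈ Sᶜ, c x y = ∑ y ∈ S, ∑ x ∈ Sᶜ, c y x :=
          Finset.sum_congr rfl fun y _ => Finset.sum_congr rfl fun x _ => hsymc x y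
        rw [h4]
        ring

lemma exists_minimal_cut {ν : W → W → ℕ} {a b : W} {c : W → W → ℕ}
    (hc : IsCutFn ν a b c) :
    ∃ c', IsMinimalCutFn ν a b c' ∧ ∀ x y, c' x y ≤ c x y := by
  classical
  set P : ℕ → Prop := fun n => ∃ c' : W → W → ℕ, (∀ x y, c' x y ≤ c x y) ∧
    IsCutFn ν a b c' ∧ (∑ x, ∑ y, c' x y) = n with hP
  have hPex : ∃ n, P n := ⟨∑ x, ∑ y, c x y, c, fun _ _ => le_rfl, hc, rfl⟩
  obtain ⟨c', hle', hcut', hsum'⟩ := Nat.find_spec hPex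
  refine ⟨c', ⟨hcut', ?_⟩, hle'⟩
  intro c'' hle'' hcut''
  have hP'' : P (∑ x, ∑ y, c'' x y) :=
    ⟨c'', fun x y => le_trans (hle'' x y) (hle' x y), hcut'', rfl⟩
  have h1 : Nat.find hPex ≤ ∑ x, ∑ y, c'' x y := Nat.find_le hP''
  have h2 : ∑ x, ∑ y, c'' x y ≤ ∑ x, ∑ y, c' x y :=
    Finset.sum_le_sum fun x _ => Finset.sum_le_sum fun y _ => hle'' x y
  have heq : ∑ x, ∑ y, c'' x y = ∑ x, ∑ y, c' x y := by omega
  have h3 : ∀ x ∈ Finset.univ, ∑ y, c'' x y = ∑ y, c' x y :=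
    (Finset.sum_eq_sum_iff_of_le fun x _ =>
      Finset.sum_le_sum fun y _ => hle'' x y).mp heq
  funext x y
  exact (Finset.sum_eq_sum_iff_of_le fun y _ => hle'' x y).mp
    (h3 x (Finset.mem_univ x)) y (Finset.mem_univ y)

lemma partition_cut {ν : W → W → ℕ} (hsym : ∀ x y, ν x y = ν y x) {a b : W}
    {S : Finset W} (ha : a ∈ S) (hb : b ∉ S) :
    IsCutFn ν a b (fun x y => if (x ∈ S ∧ y ∉ S) ∨ (y ∈ S ∧ x ∉ S) then ν x y else 0) := by
  refine ⟨?_, ?_, ?_⟩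
  · intro x y
    by_cases h1 : x ∈ S <;> by_cases h2 : y ∈ S <;> simp [h1, h2, hsym x y]
  · intro x y
    dsimp only
    split <;> simp
  · intro hreach
    have hS : ∀ z, Relation.ReflTransGen
        (fun x y => (if (x ∈ S ∧ y ∉ S) ∨ (y ∈ S ∧ x ∉ S) then ν x y else 0) < ν x y) a z →
        z ∈ S := by
      intro z hz
      induction hz with
      | refl => exact ha
      | @tail p q _ hstep ih =>
        by_contra hq
        rw [if_pos (Or.inl ⟨ih, hq⟩)] at hstep
        exact lt_irrefl _ hstep
    exact hb (hS _ hreach)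

lemma flow_saturate_source {cap f : W → W → ℕ} {a : W}
    (hle : ∀ x y, f x y ≤ cap x y) (hout : excess f a = (outDeg cap a : ℤ)) :
    (∀ y, f a y = cap a y) ∧ ∀ y, f y a = 0 := by
  have h1 : outDeg f a ≤ outDeg cap a := Finset.sum_le_sum fun y _ => hle a y
  have h2 : inDeg f a = 0 ∧ outDeg f a = outDeg cap a := by
    unfold excess at hout; omega
  constructor
  · intro y
    exact (Finset.sum_eq_sum_iff_of_le fun y _ => hle a y).mp h2.2 y (Finset.mem_univ y)
  · intro y
    have := h2.1
    unfold inDeg at this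
    exact Finset.sum_eq_zero_iff.mp this y (Finset.mem_univ y)

lemma flow_saturate_sink {cap f : W → W → ℕ} {b : W}
    (hle : ∀ x y, f x y ≤ cap x y) (hin : excess f b = -(inDeg cap b : ℤ)) :
    (∀ y, f y b = cap y b) ∧ ∀ y, f b y = 0 := by
  have h1 : inDeg f b ≤ inDeg cap b := Finset.sum_le_sum fun y _ => hle y b
  have h2 : outDeg f b = 0 ∧ inDeg f b = inDeg cap b := by
    unfold excess at hin; omega
  constructor
  · intro y
    exact (Finset.sum_eq_sum_iff_of_le fun y _ => hle y b).mp h2.2 y (Finset.mem_univ y)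
  · intro y
    have := h2.1
    unfold outDeg at this
    exact Finset.sum_eq_zero_iff.mp this y (Finset.mem_univ y)

lemma cancel_flow (f : W → W → ℕ) :
    ∃ f' : W → W → ℕ, (∀ x y, f' x y ≤ f x y) ∧ (∀ z, excess f' z = excess f z) ∧
      (∀ x y, f' x y = 0 ∨ f' y x = 0) := by
  set f' : W → W → ℕ := fun x y => f x y - min (f x y) (f y x) with hf'
  refine ⟨f', fun x y => Nat.sub_le _ _, ?_, ?_⟩
  · intro z
    have hout : outDeg f z = outDeg f' z + ∑ y, min (f z y) (f y z) := by
      unfold outDeg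
      rw [← Finset.sum_add_distrib]
      refine Finset.sum_congr rfl fun y _ => ?_
      simp only [hf']
      omega
    have hin : inDeg f z = inDeg f' z + ∑ y, min (f z y) (f y z) := by
      unfold inDeg
      rw [← Finset.sum_add_distrib]
      refine Finset.sum_congr rfl fun y _ => ?_
      simp only [hf']
      rw [min_comm]
      omega
    unfold excess
    omega
  · intro x y
    rcases le_total (f x y) (f y x) with h | h
    · left; simp only [hf']; omega
    · right; simp only [hf']; omega

end Flow

section Specific

set_option linter.unusedSectionVars false

open Sum

-- Capacities for the reduced network: full multiplicity on edges in the union of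
-- small `t`-cuts, capacity `1` on other edges of `G`.
open scoped Classical in
noncomputable def capFn (G : SimpleGraph V) [DecidableRel G.Adj] (t : V → ℤ)
    (μH : V → V → ℕ) : (V ⊕ Bool) → (V ⊕ Bool) → ℕ
  | Sum.inl u, Sum.inl v =>
      if InUnionOfSmallTCuts G t u v ∨ InUnionOfSmallTCuts G t v u then μH u v
      else min (μH u v) 1
  | Sum.inl u, Sum.inr c => if c then (t u).toNat else (-t u).toNat
  | Sum.inr c, Sum.inl v => if c then (t v).toNat else (-t v).toNat
  | Sum.inr _, Sum.inr _ => 0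

/-- The comparison flow extracted from a `t`-balanced multi-orientation. -/
def gFn (μD : V → V → ℕ) (t : V → ℤ) : (V ⊕ Bool) → (V ⊕ Bool) → ℕ
  | Sum.inl u, Sum.inl v => μD u v
  | Sum.inl u, Sum.inr c => if c then 0 else (-t u).toNat
  | Sum.inr c, Sum.inl v => if c then (t v).toNat else 0
  | Sum.inr _, Sum.inr _ => 0

variable (G : SimpleGraph V) [DecidableRel G.Adj] (t : V → ℤ) (μH : V → V → ℕ)

lemma inUnion_symm {u v : V} (h : InUnionOfSmallTCuts G t u v) :
    InUnionOfSmallTCuts G t v u := by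
  obtain ⟨c, hmin, hsize, hpos⟩ := h
  exact ⟨c, hmin, hsize, by rwa [hmin.1.1 (inl v) (inl u)]⟩

lemma auxGraph_symm (hsym : ∀ u v, μH u v = μH v u) :
    ∀ x y, auxGraph μH t x y = auxGraph μH t y x := by
  intro x y
  cases x <;> cases y <;> simp [auxGraph, hsym]

lemma capFn_symm (hsym : ∀ u v, μH u v = μH v u) :
    ∀ x y, capFn G t μH x y = capFn G t μH y x := by
  intro x y
  cases x with
  | inl u =>
    cases y with
    | inl v =>
      by_cases h1 : InUnionOfSmallTCuts G t u v <;>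
        by_cases h2 : InUnionOfSmallTCuts G t v u <;>
          simp [capFn, h1, h2, hsym u v]
    | inr c => rfl
  | inr c =>
    cases y with
    | inl v => rfl
    | inr c' => rfl

lemma capFn_le_aux : ∀ x y, capFn G t μH x y ≤ auxGraph μH t x y := by
  intro x y
  cases x <;> cases y <;> simp [capFn, auxGraph]
  split
  · exact le_rfl
  · exact min_le_left _ _

lemma nuG_le_capFn (hAdj : ∀ u v, G.Adj u v → 1 ≤ μH u v) :
    ∀ x y, auxGraph (fun x y => if G.Adj x y then 1 else 0) t x y ≤ capFn G t μH x y := by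
  intro x y
  cases x with
  | inl u =>
    cases y with
    | inl v =>
      simp only [auxGraph, capFn]
      by_cases hadj : G.Adj u v
      · have h1 := hAdj u v hadj
        simp only [hadj, if_pos]
        split
        · omega
        · omega
      · simp [hadj]
    | inr c => simp [auxGraph, capFn]
  | inr c =>
    cases y with
    | inl v => simp [auxGraph, capFn]
    | inr c' => simp [auxGraph, capFn]

lemma capFn_pos_nuG_pos (hNon : ∀ u v, ¬ G.Adj u v → μH u v = 0) :
    ∀ x y, 0 < capFn G t μH x y →
      0 < auxGraph (fun x y => if G.Adj x y then 1 else 0) t x y := by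
  intro x y
  cases x with
  | inl u =>
    cases y with
    | inl v =>
      intro h
      have hμ : 0 < μH u v := by
        simp only [capFn] at h
        by_cases hc : InUnionOfSmallTCuts G t u v ∨ InUnionOfSmallTCuts G t v u
        · rwa [if_pos hc] at h
        · rw [if_neg hc] at h; omega
      have hadj : G.Adj u v := by
        by_contra hna
        rw [hNon u v hna] at hμ
        omega
      simp [auxGraph, hadj]
    | inr c => intro h; simpa [capFn, auxGraph] using h
  | inr c =>
    cases y with
    | inl v => intro h; simpa [capFn, auxGraph] using h
    | inr c' => intro h; simp [capFn] at h

lemma pN_cast :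
    ((∑ v, (t v).toNat : ℕ) : ℤ) = ∑ x ∈ Finset.univ.filter (fun x => 0 < t x), t x := by
  rw [Finset.sum_filter]
  push_cast
  refine Finset.sum_congr rfl fun v _ => ?_
  by_cases h : 0 < t v
  · rw [if_pos h, Int.toNat_of_nonneg (le_of_lt h)]
  · rw [if_neg h]
    have : t v ≤ 0 := by omega
    simp [Int.toNat_of_nonpos this]

lemma pN_neg (ht : ∑ v, t v = 0) : ∑ v, (-t v).toNat = ∑ v, (t v).toNat := by
  have h1 : ∑ v, (((t v).toNat : ℤ) - ((-t v).toNat : ℤ)) = ∑ v, t v := by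
    refine Finset.sum_congr rfl fun v _ => ?_
    omega
  rw [ht, Finset.sum_sub_distrib, sub_eq_zero] at h1
  have h2 : ((∑ v, (t v).toNat : ℕ) : ℤ) = ((∑ v, (-t v).toNat : ℕ) : ℤ) := by
    push_cast
    exact h1
  exact_mod_cast h2.symm

lemma gFn_isFlow (μD : V → V → ℕ) (hbal : TBalanced t μD)
    (hle : ∀ u v, μD u v ≤ μH u v) :
    IsFlow (auxGraph μH t) (inr true) (inr false) (gFn μD t) ∧
      excess (gFn μD t) (inr true) = ((∑ v, (t v).toNat : ℕ) : ℤ) := by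
  have houtl : ∀ v : V, outDeg (gFn μD t) (inl v) = outDeg μD v + (-t v).toNat := by
    intro v
    unfold outDeg
    rw [Fintype.sum_sum_type, Fintype.sum_bool]
    simp [gFn]
  have hinl : ∀ v : V, inDeg (gFn μD t) (inl v) = inDeg μD v + (t v).toNat := by
    intro v
    unfold inDeg
    rw [Fintype.sum_sum_type, Fintype.sum_bool]
    simp [gFn]
  refine ⟨⟨?_, ?_⟩, ?_⟩
  · intro x y
    cases x with
    | inl u =>
      cases y with
      | inl v => simpa [gFn, auxGraph] using hle u v
      | inr c => cases c <;> simp [gFn, auxGraph]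
    | inr c =>
      cases y with
      | inl v => cases c <;> simp [gFn, auxGraph]
      | inr c' => simp [gFn, auxGraph]
  · intro x hxa hxb
    cases x with
    | inl v =>
      have hb := hbal v
      unfold excess
      rw [houtl v, hinl v]
      unfold TBalanced at hb
      push_cast
      omega
    | inr c =>
      cases c
      · exact absurd rfl hxb
      · exact absurd rfl hxa
  · unfold excess outDeg inDeg
    rw [Fintype.sum_sum_type, Fintype.sum_bool, Fintype.sum_sum_type, Fintype.sum_bool]
    simp [gFn]

lemma cut_lower_bound
    (hsym : ∀ u v, μH u v = μH v u)
    (hAdj : ∀ u v, G.Adj u v → 1 ≤ μH u v) (hNon : ∀ u v, ¬ G.Adj u v → μH u v = 0)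
    (g : (V ⊕ Bool) → (V ⊕ Bool) → ℕ)
    (hg : IsFlow (auxGraph μH t) (inr true) (inr false) g)
    (hga : excess g (inr true) = ((∑ v, (t v).toNat : ℕ) : ℤ))
    (S : Finset (V ⊕ Bool)) (ha : (inr true : V ⊕ Bool) ∈ S) (hb : (inr false : V ⊕ Bool) ∉ S) :
    (∑ v, (t v).toNat) ≤ ∑ x ∈ S, ∑ y ∈ Sᶜ, capFn G t μH x y := by
  classical
  by_contra hcon
  push_neg at hcon
  set pN : ℕ := ∑ v, (t v).toNat with hpN
  set νG : (V ⊕ Bool) → (V ⊕ Bool) → ℕ :=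
    auxGraph (fun x y => if G.Adj x y then 1 else 0) t with hνG
  have hνGsym : ∀ x y, νG x y = νG y x := by
    refine auxGraph_symm t _ fun u v => ?_
    by_cases h : G.Adj u v
    · simp [h, h.symm]
    · have h' : ¬ G.Adj v u := fun hh => h hh.symm
      simp [h, h']
  have hcs := partition_cut hνGsym ha hb
  obtain ⟨c', hmin', hle'⟩ := exists_minimal_cut hcs
  -- size bound for c'
  have hsize : ∑ x, ∑ y, c' x y < 2 * pN := by
    have h1 : ∑ x, ∑ y, c' x y
        ≤ ∑ x, ∑ y, (if (x ∈ S ∧ y ∉ S) ∨ (y ∈ S ∧ x ∉ S) then νG x y else 0) :=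
      Finset.sum_le_sum fun x _ => Finset.sum_le_sum fun y _ => hle' x y
    have h2 : ∑ x, ∑ y, (if (x ∈ S ∧ y ∉ S) ∨ (y ∈ S ∧ x ∉ S) then νG x y else 0)
        = 2 * ∑ x ∈ S, ∑ y ∈ Sᶜ, νG x y := sum_ite_crossEither νG hνGsym S
    have h3 : ∑ x ∈ S, ∑ y ∈ Sᶜ, νG x y ≤ ∑ x ∈ S, ∑ y ∈ Sᶜ, capFn G t μH x y :=
      Finset.sum_le_sum fun x _ => Finset.sum_le_sum fun y _ => nuG_le_capFn G t μH hAdj x y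
    omega
  -- the reachable set of the minimal cut
  set S' : Finset (V ⊕ Bool) := Finset.univ.filter
    (fun z => Relation.ReflTransGen (fun x y => c' x y < νG x y) (inr true) z) with hS'
  have ha' : (inr true : V ⊕ Bool) ∈ S' := by
    simp only [hS', Finset.mem_filter, Finset.mem_univ, true_and]
    exact Relation.ReflTransGen.refl
  have hb' : (inr false : V ⊕ Bool) ∉ S' := by
    simp only [hS', Finset.mem_filter, Finset.mem_univ, true_and]
    exact hmin'.1.2.2
  have hcross : ∀ x y, x ∈ S' → y ∉ S' → c' x y = νG x y := by
    intro x y hx hy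
    refine le_antisymm (hmin'.1.2.1 x y) ?_
    by_contra hlt
    push_neg at hlt
    apply hy
    simp only [hS', Finset.mem_filter, Finset.mem_univ, true_and] at hx ⊢
    exact Relation.ReflTransGen.tail hx hlt
  -- edges crossing S' are in the union of small t-cuts
  have keyA : ∀ u v : V, (inl u : V ⊕ Bool) ∈ S' → (inl v : V ⊕ Bool) ∉ S' →
      G.Adj u v → InUnionOfSmallTCuts G t u v := by
    intro u v hu hv hadj
    refine ⟨c', hmin', ?_, ?_⟩
    · have := pN_cast t
      rw [← hpN] at this
      rw [← this]
      exact_mod_cast hsize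
    · rw [hcross _ _ hu hv]
      simp [hνG, auxGraph, hadj]
  have keyEq : ∀ x y, x ∈ S' → y ∉ S' → capFn G t μH x y = auxGraph μH t x y := by
    intro x y hx hy
    cases x with
    | inl u =>
      cases y with
      | inl v =>
        by_cases hadj : G.Adj u v
        · have hin := keyA u v hx hy hadj
          simp [capFn, auxGraph, Or.inl hin]
        · have h1 : μH u v = 0 := hNon u v hadj
          simp [capFn, auxGraph, h1]
      | inr c => rfl
    | inr c =>
      cases y with
      | inl v => rfl
      | inr c' => rfl
  have keyCross : ∀ x y, x ∈ S' → y ∉ S' → 0 < capFn G t μH x y →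
      (x ∈ S ∧ y ∉ S) ∨ (y ∈ S ∧ x ∉ S) := by
    intro x y hx hy hpos
    have h1 : 0 < νG x y := capFn_pos_nuG_pos G t μH hNon x y hpos
    have h2 : 0 < c' x y := by rw [hcross _ _ hx hy]; exact h1
    have h3 := hle' x y
    by_contra hne
    rw [if_neg hne] at h3
    omega
  -- the capacity of the cut S' is at least pN
  have hlow : (pN : ℤ) ≤ ∑ x ∈ S', ∑ y ∈ S'ᶜ, (capFn G t μH x y : ℤ) := by
    have h1 := weak_duality hg ha' hb'
    rw [hga] at h1
    refine le_trans h1 (le_of_eq ?_)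
    refine Finset.sum_congr rfl fun x hx => Finset.sum_congr rfl fun y hy => ?_
    rw [keyEq x y hx (Finset.mem_compl.mp hy)]
  have hlowN : pN ≤ ∑ x ∈ S', ∑ y ∈ S'ᶜ, capFn G t μH x y := by
    exact_mod_cast hlow
  -- comparison of the two cuts
  have hcmp : 2 * (∑ x ∈ S', ∑ y ∈ S'ᶜ, capFn G t μH x y)
      ≤ 2 * ∑ x ∈ S, ∑ y ∈ Sᶜ, capFn G t μH x y := by
    rw [← sum_ite_crossEither (capFn G t μH) (capFn_symm G t μH hsym) S',
        ← sum_ite_crossEither (capFn G t μH) (capFn_symm G t μH hsym) S]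
    refine Finset.sum_le_sum fun x _ => Finset.sum_le_sum fun y _ => ?_
    by_cases hxy : (x ∈ S' ∧ y ∉ S') ∨ (y ∈ S' ∧ x ∉ S')
    · rw [if_pos hxy]
      by_cases hpos : 0 < capFn G t μH x y
      · have hcr : (x ∈ S ∧ y ∉ S) ∨ (y ∈ S ∧ x ∉ S) := by
          rcases hxy with ⟨h1, h2⟩ | ⟨h1, h2⟩
          · exact keyCross x y h1 h2 hpos
          · have := keyCross y x h1 h2 (by
              rwa [capFn_symm G t μH hsym y x])
            tauto
        rw [if_pos hcr]
      · have h0 : capFn G t μH x y = 0 := by omega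
        rw [h0]
        split <;> omega
    · rw [if_neg hxy]
      split <;> omega
  omega

end Specific

theorem undirected_version_has_wellBehaved_tRoad
    (G : SimpleGraph V) [DecidableRel G.Adj] (w : Sym2 V → ℕ) (t : V → ℤ)
    (ht : ∑ v, t v = 0)
    (μD : V → V → ℕ)
    (hmo : IsMultiOrientation G μD)
    (hbal : TBalanced t μD)
    (hminweight : ∀ μ' : V → V → ℕ,
      IsMultiOrientation G μ' → TBalanced t μ' → weight w μD ≤ weight w μ') :
    ∃ μT : V → V → ℕ,
      IsTRoad (fun u v => μD u v + μD v u) t μT ∧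
      ∀ u v : V, G.Adj u v → ¬ InUnionOfSmallTCuts G t u v → μT u v + μT v u ≤ 1 := by
  classical
  have hab : (Sum.inr true : V ⊕ Bool) ≠ Sum.inr false := by simp
  set μH : V → V → ℕ := fun u v => μD u v + μD v u with hμH
  have hsym : ∀ u v, μH u v = μH v u := fun u v => by simp [hμH, Nat.add_comm]
  have hAdj : ∀ u v, G.Adj u v → 1 ≤ μH u v := fun u v h => hmo.1 u v h
  have hNon : ∀ u v, ¬ G.Adj u v → μH u v = 0 := by
    intro u v h
    have h1 := hmo.2 u v h
    have h2 := hmo.2 v u fun hh => h hh.symm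
    simp [hμH, h1, h2]
  obtain ⟨hgflow, hga⟩ := gFn_isFlow t μH μD hbal (fun u v => by simp [hμH])
  set pN : ℕ := ∑ v, (t v).toNat with hpN
  set cap := capFn G t μH with hcap
  obtain ⟨f₀, hf₀, hmax⟩ := exists_max_flow cap (Sum.inr true) (Sum.inr false)
  have hnr : ¬ Relation.ReflTransGen (resid cap f₀) (Sum.inr true) (Sum.inr false) :=
    maxflow_not_reach hab hf₀ hmax
  set S : Finset (V ⊕ Bool) :=
    Finset.univ.filter (fun z => Relation.ReflTransGen (resid cap f₀) (Sum.inr true) z) with hS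
  have haS : (Sum.inr true : V ⊕ Bool) ∈ S := by
    simp only [hS, Finset.mem_filter, Finset.mem_univ, true_and]
    exact Relation.ReflTransGen.refl
  have hbS : (Sum.inr false : V ⊕ Bool) ∉ S := by
    simp only [hS, Finset.mem_filter, Finset.mem_univ, true_and]
    exact hnr
  have hcut := cut_lower_bound G t μH hsym hAdj hNon _ hgflow hga S haS hbS
  have h4 : outDeg cap (Sum.inr true) = pN := by
    rw [hpN]
    unfold outDeg
    rw [Fintype.sum_sum_type, Fintype.sum_bool]
    simp [hcap, capFn]
  have h5 : inDeg cap (Sum.inr false) = pN := by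
    rw [hpN, ← pN_neg t ht]
    unfold inDeg
    rw [Fintype.sum_sum_type, Fintype.sum_bool]
    simp [hcap, capFn]
  have hsat : ∀ x y, x ∈ S → y ∉ S → f₀ x y = cap x y ∧ f₀ y x = 0 := by
    intro x y hx hy
    have hres : ¬ resid cap f₀ x y := by
      intro hr
      apply hy
      simp only [hS, Finset.mem_filter, Finset.mem_univ, true_and] at hx ⊢
      exact hx.tail hr
    unfold resid at hres
    push_neg at hres
    exact ⟨le_antisymm (hf₀.1 x y) hres.1, by omega⟩
  have hvala : excess f₀ (Sum.inr true) = (pN : ℤ) := by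
    have h1 : ∑ x ∈ S, excess f₀ x = excess f₀ (Sum.inr true) := by
      refine Finset.sum_eq_single_of_mem _ haS fun z hz hza => ?_
      exact hf₀.2 z hza fun h => hbS (h ▸ hz)
    have h2 : excess f₀ (Sum.inr true) = ∑ x ∈ S, ∑ y ∈ Sᶜ, (cap x y : ℤ) := by
      rw [← h1, sum_excess]
      refine Finset.sum_congr rfl fun x hx => Finset.sum_congr rfl fun y hy => ?_
      obtain ⟨e1, e2⟩ := hsat x y hx (Finset.mem_compl.mp hy)
      rw [e1, e2]
      simp
    have hup : excess f₀ (Sum.inr true) ≤ (pN : ℤ) := by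
      have h3 := excess_le_outDeg_cap hf₀.1 (Sum.inr true)
      rw [h4] at h3
      exact h3
    have hdn : (pN : ℤ) ≤ excess f₀ (Sum.inr true) := by
      rw [h2]
      exact_mod_cast hcut
    omega
  have hvalb : excess f₀ (Sum.inr false) = -(pN : ℤ) := by
    rw [excess_sink hab hf₀, hvala]
  obtain ⟨f₁, hle₁, hexc₁, hzero₁⟩ := cancel_flow f₀
  have hle₁' : ∀ x y, f₁ x y ≤ cap x y := fun x y => le_trans (hle₁ x y) (hf₀.1 x y)
  have hf₁ : IsFlow cap (Sum.inr true) (Sum.inr false) f₁ :=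
    ⟨hle₁', fun z hza hzb => by rw [hexc₁ z]; exact hf₀.2 z hza hzb⟩
  have hsa := flow_saturate_source hle₁' (by rw [hexc₁, hvala, h4])
  have hsb := flow_saturate_sink hle₁' (by rw [hexc₁, hvalb, h5])
  refine ⟨fun u v => f₁ (Sum.inl u) (Sum.inl v), ⟨?_, ?_⟩, ?_⟩
  · intro u v
    have h1 : cap (Sum.inl u) (Sum.inl v) ≤ μH u v := by
      have := capFn_le_aux G t μH (Sum.inl u) (Sum.inl v)
      rw [← hcap] at this
      simpa [auxGraph] using this
    have h2 : cap (Sum.inl v) (Sum.inl u) ≤ μH u v := by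
      have := capFn_le_aux G t μH (Sum.inl v) (Sum.inl u)
      rw [← hcap] at this
      simpa [auxGraph, hsym v u] using this
    have h3 := hle₁' (Sum.inl u) (Sum.inl v)
    have h4' := hle₁' (Sum.inl v) (Sum.inl u)
    show f₁ (Sum.inl u) (Sum.inl v) + f₁ (Sum.inl v) (Sum.inl u) ≤ μH u v
    rcases hzero₁ (Sum.inl u) (Sum.inl v) with h | h <;> omega
  · intro v
    have hcons : excess f₁ (Sum.inl v) = 0 := hf₁.2 _ (by simp) (by simp)
    have hov : outDeg f₁ (Sum.inl v)
        = (∑ u, f₁ (Sum.inl v) (Sum.inl u))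
          + (f₁ (Sum.inl v) (Sum.inr true) + f₁ (Sum.inl v) (Sum.inr false)) := by
      unfold outDeg
      rw [Fintype.sum_sum_type, Fintype.sum_bool]
    have hiv : inDeg f₁ (Sum.inl v)
        = (∑ u, f₁ (Sum.inl u) (Sum.inl v))
          + (f₁ (Sum.inr true) (Sum.inl v) + f₁ (Sum.inr false) (Sum.inl v)) := by
      unfold inDeg
      rw [Fintype.sum_sum_type, Fintype.sum_bool]
    have e1 : f₁ (Sum.inl v) (Sum.inr true) = 0 := hsa.2 (Sum.inl v)
    have e2 : f₁ (Sum.inl v) (Sum.inr false) = cap (Sum.inl v) (Sum.inr false) :=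
      hsb.1 (Sum.inl v)
    have e3 : f₁ (Sum.inr true) (Sum.inl v) = cap (Sum.inr true) (Sum.inl v) :=
      hsa.1 (Sum.inl v)
    have e4 : f₁ (Sum.inr false) (Sum.inl v) = 0 := hsb.2 (Sum.inl v)
    have e5 : cap (Sum.inl v) (Sum.inr false) = (-t v).toNat := by simp [hcap, capFn]
    have e6 : cap (Sum.inr true) (Sum.inl v) = (t v).toNat := by simp [hcap, capFn]
    unfold excess at hcons
    rw [hov, hiv, e1, e2, e3, e4, e5, e6] at hcons
    unfold outDeg inDeg
    dsimp only
    push_cast at hcons ⊢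
    omega
  · intro u v hadjuv hnin
    have hnin' : ¬ InUnionOfSmallTCuts G t v u := fun h => hnin (inUnion_symm G t h)
    have hc1 : cap (Sum.inl u) (Sum.inl v) ≤ 1 := by
      rw [hcap]
      simp only [capFn]
      rw [if_neg (by tauto)]
      exact min_le_right _ _
    have hc2 : cap (Sum.inl v) (Sum.inl u) ≤ 1 := by
      rw [hcap]
      simp only [capFn]
      rw [if_neg (by tauto)]
      exact min_le_right _ _
    have h3 := hle₁' (Sum.inl u) (Sum.inl v)
    have h4' := hle₁' (Sum.inl v) (Sum.inl u)
    show f₁ (Sum.inl u) (Sum.inl v) + f₁ (Sum.inl v) (Sum.inl u) ≤ 1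
    rcases hzero₁ (Sum.inl u) (Sum.inl v) with h | h <;> omega

end Stmt5
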